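/- arXiv:0806.4497 — 5 statements merged into one kernel-verified Lean document; each statement's English description precedes it below -/
import Mathlib

section
/- For a real symmetric matrix H with resolvent G and i ≠ p, the second derivative of the off-diagonal resolvent entry satisfies ∂²G(i,p)/∂H(p,i)² = 2G(i,p)³ + 6G(i,i)G(p,p)G(i,p), where differentiation with respect to H(p,i) perturbs both symmetric entries (p,i) and (i,p). -/
/-!
Along the line `t ↦ C + t • E`, with `C = H - z` and `E = e_{pi} + e_{ip}`, the resolvent
`R(t) = (C + t • E)⁻¹` satisfies `R' = -R E R` wherever it exists, hence `R''(0) = 2 G E G E G`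
with `G = C⁻¹`. `C` is invertible because a Hermitian matrix has real spectrum, and invertibility
is an open condition, so `R` exists near `t = 0`. The `(i, p)` entry of `G E G E G` is a sum of
four triple products of entries of `G`, which collapse to `G_ip³ + 3 G_ii G_pp G_ip` because `G`
is symmetric.
-/

open Filter Topology

section RingInverse

variable {𝕜 R F : Type*} [NontriviallyNormedField 𝕜] [NormedRing R] [NormedAlgebra 𝕜 R]
  [CompleteSpace R] [NormedAddCommGroup F] [NormedSpace 𝕜 F]

theorem hasDerivAt_ringInverse_add_smul {a e : R} {t : 𝕜} (h : IsUnit (a + t • e)) :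
    HasDerivAt (fun s : 𝕜 => Ring.inverse (a + s • e))
      (-(Ring.inverse (a + t • e) * e * Ring.inverse (a + t • e))) t := by
  obtain ⟨u, hu⟩ := h
  have hline : HasDerivAt (fun s : 𝕜 => a + s • e) e t := by
    simpa using ((hasDerivAt_id t).smul_const e).const_add a
  have hinv := hasFDerivAt_ringInverse (𝕜 := 𝕜) u
  rw [← Ring.inverse_unit, hu] at hinv
  have hcomp := hinv.comp_hasDerivAt t hline
  rw [neg_apply, ContinuousLinearMap.mulLeftRight_apply] at hcomp
  exact hcomp

theorem iteratedDeriv_two_ringInverse_add_smul (L : R →L[𝕜] F) {a : R} (ha : IsUnit a) (e : R) :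
    iteratedDeriv 2 (fun t : 𝕜 => L (Ring.inverse (a + t • e))) 0
      = 2 • L (Ring.inverse a * e * Ring.inverse a * e * Ring.inverse a) := by
  set g : 𝕜 → R := fun t => Ring.inverse (a + t • e)
  have hunits : ∀ᶠ t in 𝓝 (0 : 𝕜), IsUnit (a + t • e) :=
    (Continuous.tendsto (by fun_prop) 0).eventually (Units.isOpen.mem_nhds (by simpa using ha))
  have hderiv : deriv (fun t => L (g t)) =ᶠ[𝓝 0] fun t => -L (g t * e * g t) := by
    filter_upwards [hunits] with t ht
    exact (L.hasFDerivAt.comp_hasDerivAt t (hasDerivAt_ringInverse_add_smul ht)).deriv.trans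
      (map_neg L _)
  have hg0 : HasDerivAt g (-(g 0 * e * g 0)) 0 :=
    hasDerivAt_ringInverse_add_smul (by simpa using ha)
  have hsecond : HasDerivAt (fun t => -L (g t * e * g t))
      (-L (-(g 0 * e * g 0) * e * g 0 + g 0 * e * -(g 0 * e * g 0))) 0 :=
    (L.hasFDerivAt.comp_hasDerivAt 0 ((hg0.mul_const e).mul hg0)).neg
  rw [iteratedDeriv_succ, iteratedDeriv_one, hderiv.deriv_eq, hsecond.deriv]
  simp [g, mul_assoc, two_smul]

end RingInverse

namespace Matrix

theorem IsHermitian.isUnit_sub_smul_one {𝕜 n : Type*} [RCLike 𝕜] [Fintype n] [DecidableEq n]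
    {A : Matrix n n 𝕜} (hA : A.IsHermitian) {z : 𝕜} (hz : RCLike.im z ≠ 0) :
    IsUnit (A - z • 1) := by
  have hz_spec : z ∉ spectrum 𝕜 A := by
    rw [hA.spectrum_eq_image_range]
    rintro ⟨x, -, rfl⟩
    exact hz (RCLike.ofReal_im x)
  rwa [spectrum.notMem_iff, ← IsUnit.neg_iff, neg_sub, Algebra.algebraMap_eq_smul_one] at hz_spec

-- Any Banach-algebra norm on matrices serves; the statement itself involves none.
open scoped Matrix.Norms.Operator in
theorem iteratedDeriv_two_inv_add_smul_apply {𝕜 n : Type*} [RCLike 𝕜] [Fintype n]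
    [DecidableEq n] {A : Matrix n n 𝕜} (hA : IsUnit A) (E : Matrix n n 𝕜) (i j : n) :
    iteratedDeriv 2 (fun t : ℝ => (A + t • E)⁻¹ i j) 0 = 2 * (A⁻¹ * E * A⁻¹ * E * A⁻¹) i j := by
  simpa [nonsing_inv_eq_ringInverse, nsmul_eq_mul] using iteratedDeriv_two_ringInverse_add_smul
    (LinearMap.toContinuousLinearMap (entryLinearMap ℝ 𝕜 i j)) hA E

theorem mul_single_mul_apply {α l m n o : Type*} [CommSemiring α] [Fintype m] [Fintype n]
    [DecidableEq m] [DecidableEq n] (A : Matrix l m α) (B : Matrix n o α) (a : m) (b : n) (c : α)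
    (x : l) (y : o) : (A * single a b c * B) x y = A x a * c * B b y := by
  simp [mul_apply, single, ite_and]

theorem mul_single_add_single_mul_apply {α l n o : Type*} [CommSemiring α] [Fintype n]
    [DecidableEq n] (A : Matrix l n α) (B : Matrix n o α) (a b : n) (x : l) (y : o) :
    (A * (single a b (1 : α) + single b a (1 : α)) * B) x y = A x a * B b y + A x b * B a y := by
  rw [Matrix.mul_add, Matrix.add_mul, add_apply, mul_single_mul_apply, mul_single_mul_apply,
    mul_one, mul_one]

end Matrix

open Matrix

theorem resolvent_offdiag_second_deriv_general (N : ℕ) (H : Matrix (Fin N) (Fin N) ℝ)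
    (hH : H.IsSymm) (z : ℂ) (hz : z.im ≠ 0) (i p : Fin N) :
    iteratedDeriv 2 (fun t : ℝ =>
        (((H + t • (Matrix.single p i 1 + Matrix.single i p 1)).map
            Complex.ofReal - z • (1 : Matrix (Fin N) (Fin N) ℂ))⁻¹) i p) 0
      = 2 * (((H.map Complex.ofReal - z • (1 : Matrix (Fin N) (Fin N) ℂ))⁻¹) i p) ^ 3
        + 6 * ((H.map Complex.ofReal - z • 1)⁻¹) i i
            * ((H.map Complex.ofReal - z • 1)⁻¹) p p
            * ((H.map Complex.ofReal - z • 1)⁻¹) i p := by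
  set C : Matrix (Fin N) (Fin N) ℂ := H.map Complex.ofReal - z • 1
  have hline (t : ℝ) : (H + t • (single p i 1 + single i p 1)).map Complex.ofReal - z • 1
      = C + t • (single p i (1 : ℂ) + single i p 1) := by
    rw [Matrix.map_add _ Complex.ofReal_add, add_sub_right_comm]
    congr 1
    ext a b
    simp [single, apply_ite Complex.ofReal, Complex.real_smul]
  have hC : IsUnit C :=
    ((isHermitian_iff_isSymm.mpr hH).map _ fun _ => by simp).isUnit_sub_smul_one hz
  have hG : C⁻¹.IsSymm := ((hH.map _).sub (isSymm_one.smul z)).inv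
  simp_rw [hline]
  rw [iteratedDeriv_two_inv_add_smul_apply hC, mul_single_add_single_mul_apply,
    mul_single_add_single_mul_apply, mul_single_add_single_mul_apply, hG.apply]
  ring

/-- for `i ≠ p`, the second derivative of the off-diagonal resolvent entry
under the symmetric perturbation of the pair `H(p,i) = H(i,p)` satisfies
`∂²G(i,p)/∂H(p,i)² = 2G(i,p)³ + 6G(i,i)G(p,p)G(i,p)`. -/
theorem resolvent_offdiag_second_deriv (N : ℕ) (H : Matrix (Fin N) (Fin N) ℝ)
    (hH : H.IsSymm) (z : ℂ) (hz : z.im ≠ 0) (i p : Fin N) (hip : i ≠ p) :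
    iteratedDeriv 2 (fun t : ℝ =>
        (((H + t • (Matrix.single p i 1 + Matrix.single i p 1)).map
            Complex.ofReal - z • (1 : Matrix (Fin N) (Fin N) ℂ))⁻¹) i p) 0
      = 2 * (((H.map Complex.ofReal - z • (1 : Matrix (Fin N) (Fin N) ℂ))⁻¹) i p) ^ 3
        + 6 * ((H.map Complex.ofReal - z • 1)⁻¹) i i
            * ((H.map Complex.ofReal - z • 1)⁻¹) p p
            * ((H.map Complex.ofReal - z • 1)⁻¹) i p :=
  resolvent_offdiag_second_deriv_general N H hH z hz i p
end

section
/- Cumulant expansion with q = 1: let X be a real random variable with E X = 0 and E|X|³ < ∞, and let f : ℝ → ℂ be C² with bounded second derivative. Then E[X f(X)] = E(X²)·E[f'(X)] + ε, where |ε| ≤ C · sup_t |f''(t)| · E|X|³ for an absolute constant C. -/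
/-!
Write `f x = f 0 + x • f' 0 + R x`; the mean value theorem gives `‖R x‖ ≤ M x²` and
`‖f' x - f' 0‖ ≤ M |x|`. Since `E X = 0`, the error equals `E[X • R X] - E X² • E[f' X - f' 0]`,
which is at most `M E|X|³ + M E X² E|X|`. Chebyshev's integral inequality for the similarly
ordered `X²` and `|X|` gives `E X² E|X| ≤ E|X|³`, so `C = 2` works.
-/

open MeasureTheory

section Taylor

variable {E : Type*} [NormedAddCommGroup E] [NormedSpace ℝ E] {f : ℝ → E} {M : ℝ}

theorem norm_deriv_sub_deriv_zero_le (hf' : Differentiable ℝ (deriv f))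
    (hM : ∀ t, ‖deriv (deriv f) t‖ ≤ M) (x : ℝ) : ‖deriv f x - deriv f 0‖ ≤ M * |x| := by
  simpa using convex_univ.norm_image_sub_le_of_norm_deriv_le (fun t _ => hf' t) (fun t _ => hM t)
    (Set.mem_univ 0) (Set.mem_univ x)

theorem norm_sub_sub_smul_deriv_zero_le (hf : Differentiable ℝ f)
    (hf' : Differentiable ℝ (deriv f)) (hM : ∀ t, ‖deriv (deriv f) t‖ ≤ M) (x : ℝ) :
    ‖f x - f 0 - x • deriv f 0‖ ≤ M * x ^ 2 := by
  have hM0 : 0 ≤ M := (norm_nonneg _).trans (hM 0)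
  have hderiv : ∀ t, HasDerivAt (fun s => f s - s • deriv f 0) (deriv f t - deriv f 0) t :=
    fun t => (hf t).hasDerivAt.sub (by simpa using (hasDerivAt_id t).smul_const (deriv f 0))
  have hbound : ∀ t ∈ Metric.closedBall (0 : ℝ) |x|,
      ‖deriv (fun s => f s - s • deriv f 0) t‖ ≤ M * |x| := fun t ht => by
    rw [(hderiv t).deriv]
    refine (norm_deriv_sub_deriv_zero_le hf' hM t).trans (mul_le_mul_of_nonneg_left ?_ hM0)
    simpa using ht
  have := (convex_closedBall (0 : ℝ) |x|).norm_image_sub_le_of_norm_deriv_le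
    (fun t _ => (hderiv t).differentiableAt) hbound (x := 0) (y := x)
    (Metric.mem_closedBall_self (abs_nonneg x)) (by simp)
  calc ‖f x - f 0 - x • deriv f 0‖ = ‖(f x - x • deriv f 0) - (f 0 - (0 : ℝ) • deriv f 0)‖ := by
        rw [zero_smul, sub_zero, sub_right_comm]
    _ ≤ M * |x| * ‖x - 0‖ := this
    _ = M * x ^ 2 := by rw [sub_zero, Real.norm_eq_abs, mul_assoc, ← sq, sq_abs]

theorem norm_smul_sub_sub_smul_deriv_zero_le (hf : Differentiable ℝ f)
    (hf' : Differentiable ℝ (deriv f)) (hM : ∀ t, ‖deriv (deriv f) t‖ ≤ M) (x : ℝ) :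
    ‖x • (f x - f 0 - x • deriv f 0)‖ ≤ M * |x| ^ 3 := by
  rw [norm_smul, Real.norm_eq_abs]
  calc |x| * ‖f x - f 0 - x • deriv f 0‖ ≤ |x| * (M * x ^ 2) := by
        gcongr; exact norm_sub_sub_smul_deriv_zero_le hf hf' hM x
    _ = M * |x| ^ 3 := by rw [← sq_abs]; ring

end Taylor

section Chebyshev

variable {Ω : Type*} [MeasurableSpace Ω] {μ : Measure Ω} [IsProbabilityMeasure μ] {f g : Ω → ℝ}

theorem Monovary.integral_mul_integral_le_integral_mul (hfg : Monovary f g)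
    (hf : Integrable f μ) (hg : Integrable g μ) (hfg' : Integrable (fun ω => f ω * g ω) μ) :
    (∫ ω, f ω ∂μ) * (∫ ω, g ω ∂μ) ≤ ∫ ω, f ω * g ω ∂μ := by
  -- `∫∫ (f x - f y) (g x - g y) = 2 (∫ f g - ∫ f ∫ g)` and the integrand is nonnegative.
  have hprod : 0 ≤ ∫ p : Ω × Ω, (f p.1 - f p.2) * (g p.1 - g p.2) ∂μ.prod μ :=
    integral_nonneg fun p => monovary_iff_forall_mul_nonneg.1 hfg p.2 p.1
  have diag : Integrable (fun p : Ω × Ω => f p.1 * g p.1 + f p.2 * g p.2) (μ.prod μ) :=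
    (hfg'.comp_fst μ).add (hfg'.comp_snd μ)
  have cross : Integrable (fun p : Ω × Ω => f p.1 * g p.2 + g p.1 * f p.2) (μ.prod μ) :=
    (hf.mul_prod hg).add (hg.mul_prod hf)
  have expand : (fun p : Ω × Ω => (f p.1 - f p.2) * (g p.1 - g p.2)) = fun p =>
      (f p.1 * g p.1 + f p.2 * g p.2) - (f p.1 * g p.2 + g p.1 * f p.2) := by
    funext p; ring
  rw [expand, integral_sub diag cross, integral_add (hfg'.comp_fst μ) (hfg'.comp_snd μ),
    integral_add (hf.mul_prod hg) (hg.mul_prod hf), integral_prod_mul, integral_prod_mul,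
    integral_fun_fst (fun ω => f ω * g ω), integral_fun_snd (fun ω => f ω * g ω)] at hprod
  simp only [probReal_univ, one_smul] at hprod
  linarith

end Chebyshev

section CumulantExpansion

variable {Ω : Type*} [MeasurableSpace Ω] {μ : Measure Ω} [IsProbabilityMeasure μ] {X : Ω → ℝ}
  {E : Type*} [NormedAddCommGroup E] [NormedSpace ℝ E] [CompleteSpace E] {f : ℝ → E} {M : ℝ}

theorem integral_sq_mul_integral_abs_le_integral_abs_pow_three
    (h1 : Integrable (fun ω => |X ω|) μ) (h2 : Integrable (fun ω => X ω ^ 2) μ)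
    (h3 : Integrable (fun ω => |X ω| ^ 3) μ) :
    (∫ ω, X ω ^ 2 ∂μ) * (∫ ω, |X ω| ∂μ) ≤ ∫ ω, |X ω| ^ 3 ∂μ := by
  have hcube : ∀ ω, X ω ^ 2 * |X ω| = |X ω| ^ 3 := fun ω => by rw [← sq_abs]; ring
  have hmono : Monovary (fun ω => X ω ^ 2) (fun ω => |X ω|) := fun _ _ h => sq_le_sq.2 h.le
  simpa only [hcube] using hmono.integral_mul_integral_le_integral_mul h2 h1 (by simpa only [hcube])

theorem integral_smul_sub_integral_sq_smul_integral_deriv_eq (hX : Integrable X μ)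
    (h2 : Integrable (fun ω => X ω ^ 2) μ) (hmean : ∫ ω, X ω ∂μ = 0)
    (hR : Integrable (fun ω => X ω • (f (X ω) - f 0 - X ω • deriv f 0)) μ)
    (hR' : Integrable (fun ω => deriv f (X ω) - deriv f 0) μ) :
    (∫ ω, X ω • f (X ω) ∂μ) - (∫ ω, X ω ^ 2 ∂μ) • ∫ ω, deriv f (X ω) ∂μ
      = (∫ ω, X ω • (f (X ω) - f 0 - X ω • deriv f 0) ∂μ)
        - (∫ ω, X ω ^ 2 ∂μ) • ∫ ω, deriv f (X ω) - deriv f 0 ∂μ := by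
  set b := deriv f 0
  have hsplit : (fun ω => X ω • f (X ω))
      = fun ω => (X ω • f 0 + X ω ^ 2 • b) + X ω • (f (X ω) - f 0 - X ω • b) := by
    funext ω; rw [smul_sub, smul_sub, smul_smul, ← sq]; abel
  have hlin : Integrable (fun ω => X ω • f 0 + X ω ^ 2 • b) μ :=
    (hX.smul_const _).add (h2.smul_const _)
  have hderiv : ∫ ω, deriv f (X ω) ∂μ = b + ∫ ω, deriv f (X ω) - b ∂μ := by
    calc ∫ ω, deriv f (X ω) ∂μ = ∫ ω, b + (deriv f (X ω) - b) ∂μ := by simp only [add_sub_cancel]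
      _ = b + ∫ ω, deriv f (X ω) - b ∂μ := by
        rw [integral_add (integrable_const b) hR', integral_const, probReal_univ, one_smul]
  rw [hsplit, integral_add hlin hR, integral_add (hX.smul_const _) (h2.smul_const _),
    integral_smul_const, integral_smul_const, hmean, zero_smul, zero_add, hderiv, smul_add,
    add_sub_add_left_eq_sub]

theorem norm_integral_smul_sub_integral_sq_smul_integral_deriv_le
    (hX : AEStronglyMeasurable X μ) (h3 : Integrable (fun ω => |X ω| ^ 3) μ)
    (hmean : ∫ ω, X ω ∂μ = 0) (hf : ContDiff ℝ 2 f) (hM : ∀ t, ‖deriv (deriv f) t‖ ≤ M) :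
    ‖(∫ ω, X ω • f (X ω) ∂μ) - (∫ ω, X ω ^ 2 ∂μ) • ∫ ω, deriv f (X ω) ∂μ‖
      ≤ 2 * M * ∫ ω, |X ω| ^ 3 ∂μ := by
  have hR := norm_smul_sub_sub_smul_deriv_zero_le (hf.differentiable two_ne_zero)
    hf.differentiable_deriv_two hM
  have hR' := norm_deriv_sub_deriv_zero_le hf.differentiable_deriv_two hM
  have h3' : Integrable (fun ω => ‖X ω‖ ^ 3) μ := by simpa only [Real.norm_eq_abs] using h3
  have h1 : Integrable (fun ω => |X ω|) μ := by
    simpa only [Real.norm_eq_abs, pow_one] using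
      integrable_norm_pow_of_le (p := 1) hX (by norm_num) h3'
  have h2 : Integrable (fun ω => X ω ^ 2) μ := by
    simpa only [Real.norm_eq_abs, sq_abs] using
      integrable_norm_pow_of_le (p := 2) hX (by norm_num) h3'
  have hXR : Integrable (fun ω => X ω • (f (X ω) - f 0 - X ω • deriv f 0)) μ :=
    (h3.const_mul M).mono' (hX.smul (((hf.continuous.comp_aestronglyMeasurable hX).sub
      aestronglyMeasurable_const).sub (hX.smul_const _))) (ae_of_all _ fun ω => hR (X ω))
  have hR'X : Integrable (fun ω => deriv f (X ω) - deriv f 0) μ :=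
    (h1.const_mul M).mono' ((hf.continuous_deriv (by norm_num)).comp_aestronglyMeasurable hX
      |>.sub aestronglyMeasurable_const) (ae_of_all _ fun ω => hR' (X ω))
  rw [integral_smul_sub_integral_sq_smul_integral_deriv_eq ((integrable_norm_iff hX).1 h1) h2
    hmean hXR hR'X]
  have hS2 : 0 ≤ ∫ ω, X ω ^ 2 ∂μ := integral_nonneg fun ω => sq_nonneg _
  have hcheb := integral_sq_mul_integral_abs_le_integral_abs_pow_three h1 h2 h3
  calc _ ≤ ‖∫ ω, X ω • (f (X ω) - f 0 - X ω • deriv f 0) ∂μ‖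
        + (∫ ω, X ω ^ 2 ∂μ) * ‖∫ ω, deriv f (X ω) - deriv f 0 ∂μ‖ :=
        (norm_sub_le _ _).trans_eq (by rw [norm_smul, Real.norm_of_nonneg hS2])
    _ ≤ M * (∫ ω, |X ω| ^ 3 ∂μ) + (∫ ω, X ω ^ 2 ∂μ) * (M * ∫ ω, |X ω| ∂μ) := by
        rw [← integral_const_mul, ← integral_const_mul]
        gcongr
        · exact norm_integral_le_of_norm_le (h3.const_mul M) (ae_of_all _ fun ω => hR (X ω))
        · exact norm_integral_le_of_norm_le (h1.const_mul M) (ae_of_all _ fun ω => hR' (X ω))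
    _ ≤ 2 * M * ∫ ω, |X ω| ^ 3 ∂μ := by
        have hM0 : 0 ≤ M := (norm_nonneg _).trans (hM 0)
        nlinarith [mul_le_mul_of_nonneg_left hcheb hM0]

end CumulantExpansion

/-- cumulant expansion with `q = 1`: there is an absolute constant `C > 0`
such that for any real random variable `X` with `E X = 0` and `E|X|³ < ∞` and any `C²`
function `f : ℝ → ℂ` with second derivative bounded by `M`,
`|E[X f(X)] − E(X²)·E[f'(X)]| ≤ C · M · E|X|³`. -/
theorem cumulant_expansion_q_one :
    ∃ C : ℝ, 0 < C ∧
      ∀ (Ω : Type) (_ : MeasurableSpace Ω) (μ : Measure Ω), IsProbabilityMeasure μ →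
        ∀ (X : Ω → ℝ), Measurable X →
          Integrable (fun ω => |X ω| ^ 3) μ →
          (∫ ω, X ω ∂μ) = 0 →
          ∀ (f : ℝ → ℂ), ContDiff ℝ 2 f →
            ∀ (M : ℝ), (∀ t : ℝ, ‖deriv (deriv f) t‖ ≤ M) →
              ‖(∫ ω, X ω • f (X ω) ∂μ)
                  - (∫ ω, X ω ^ 2 ∂μ) • (∫ ω, deriv f (X ω) ∂μ)‖
                ≤ C * M * ∫ ω, |X ω| ^ 3 ∂μ :=
  ⟨2, two_pos, fun _ _ _ _ _ hX h3 hmean _ hf _ hM =>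
    norm_integral_smul_sub_integral_sq_smul_integral_deriv_le hX.aestronglyMeasurable h3 hmean
      hf hM⟩
end

section
/- Unique solvability of the self-consistent system: let z with |Im z| ≥ η where η = 2v+1, ξ = −1/z, and let u(i,p) ≥ 0 satisfy Σ_p u(i,p) ≤ 1 + c/b for all i (with v²(1+c/b)/η² < 1/2). Then the system r(i) = ξ + ξ v² r(i) Σ_p r(p) u(i,p), |i| ≤ n, has a unique solution in the set of vectors with sup_i |r(i)| ≤ 2/|Im z|. -/
/-!
Write `w_i(r) = z + v² Σ_p r_p u(i,p)`; the system says exactly `r_i = -1 / w_i(r)`. On the closed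
set `K` of vectors whose entries lie in the same closed half-plane as `z`, one has
`Im w_i · Im z ≥ (Im z)²`, hence `|w_i| ≥ |Im z|`. So `r ↦ -1 / w(r)` maps `K` into itself and is a
contraction there with constant `v²(1 + c/b)/(Im z)² < 1/2`, and Banach's theorem gives a unique
fixed point in `K`. A solution in the ball of radius `2/|Im z|` automatically lies in `K`: at an
index minimising `Im r_i · Im z < 0` one would get `(Im z)² ≤ 2 v² (1 + c/b)`, contradicting the
smallness assumption.
-/

namespace SelfConsistent

variable {ι : Type*}

def sameHalfPlane (z : ℂ) : Set (ι → ℂ) := {r | ∀ i, 0 ≤ (r i).im * z.im}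

lemma isClosed_sameHalfPlane (z : ℂ) : IsClosed (sameHalfPlane (ι := ι) z) := by
  simp only [sameHalfPlane, Set.ofPred_forall]
  exact isClosed_iInter fun i =>
    isClosed_le continuous_const ((Complex.continuous_im.comp (continuous_apply i)).mul_const _)

lemma zero_mem_sameHalfPlane (z : ℂ) : (0 : ι → ℂ) ∈ sameHalfPlane z := fun i => by simp

variable [Fintype ι]

def denom (u : ι → ι → ℝ) (a : ℝ) (z : ℂ) (r : ι → ℂ) (i : ι) : ℂ :=
  z + (a : ℂ) * ∑ p, r p * (u i p : ℂ)

noncomputable def fixedPointMap (u : ι → ι → ℝ) (a : ℝ) (z : ℂ) (r : ι → ℂ) (i : ι) : ℂ :=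
  -1 / denom u a z r i

lemma im_neg_one_div (w : ℂ) : (-1 / w).im = w.im / Complex.normSq w := by
  rw [neg_div, one_div, Complex.neg_im, Complex.inv_im, neg_div, neg_neg]

lemma im_denom_mul_im (u : ι → ι → ℝ) (a : ℝ) (z : ℂ) (r : ι → ℂ) (i : ι) :
    (denom u a z r i).im * z.im = z.im ^ 2 + a * ∑ p, (r p).im * z.im * u i p := by
  simp only [denom, Complex.add_im, Complex.im_sum, Complex.mul_im,
    Complex.ofReal_re, Complex.ofReal_im, mul_zero, zero_add, zero_mul, add_zero]
  rw [add_mul, sq, mul_assoc, Finset.sum_mul]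
  simp only [mul_right_comm _ (u _ _)]

variable {u : ι → ι → ℝ} {a κ : ℝ} {z : ℂ}

lemma sq_im_le_im_denom_mul_im (hu : ∀ i p, 0 ≤ u i p) (ha : 0 ≤ a) {r : ι → ℂ}
    (hr : r ∈ sameHalfPlane z) (i : ι) : z.im ^ 2 ≤ (denom u a z r i).im * z.im := by
  rw [im_denom_mul_im]
  have : 0 ≤ ∑ p, (r p).im * z.im * u i p :=
    Finset.sum_nonneg fun p _ => mul_nonneg (hr p) (hu i p)
  nlinarith

lemma abs_im_le_norm_denom (hu : ∀ i p, 0 ≤ u i p) (ha : 0 ≤ a) {r : ι → ℂ}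
    (hr : r ∈ sameHalfPlane z) (i : ι) : |z.im| ≤ ‖denom u a z r i‖ := by
  rcases eq_or_ne z.im 0 with h0 | h0
  · simp [h0]
  refine le_of_mul_le_mul_right ?_ (abs_pos.mpr h0)
  calc |z.im| * |z.im| = z.im ^ 2 := by rw [← sq, sq_abs]
    _ ≤ (denom u a z r i).im * z.im := sq_im_le_im_denom_mul_im hu ha hr i
    _ ≤ |(denom u a z r i).im| * |z.im| := by rw [← abs_mul]; exact le_abs_self _
    _ ≤ ‖denom u a z r i‖ * |z.im| := by gcongr; exact Complex.abs_im_le_norm _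

lemma mapsTo_sameHalfPlane (hu : ∀ i p, 0 ≤ u i p) (ha : 0 ≤ a) :
    Set.MapsTo (fixedPointMap u a z) (sameHalfPlane z) (sameHalfPlane z) := fun r hr i => by
  rw [fixedPointMap, im_neg_one_div, div_mul_eq_mul_div]
  exact div_nonneg ((sq_nonneg _).trans (sq_im_le_im_denom_mul_im hu ha hr i))
    (Complex.normSq_nonneg _)

lemma norm_fixedPointMap_le (hu : ∀ i p, 0 ≤ u i p) (ha : 0 ≤ a) (hz : z.im ≠ 0) {r : ι → ℂ}
    (hr : r ∈ sameHalfPlane z) (i : ι) : ‖fixedPointMap u a z r i‖ ≤ 1 / |z.im| := by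
  rw [fixedPointMap, norm_div, norm_neg, norm_one]
  exact one_div_le_one_div_of_le (abs_pos.mpr hz) (abs_im_le_norm_denom hu ha hr i)

lemma norm_sum_mul_sub_sum_mul_le {w : ι → ℝ} (hw : ∀ p, 0 ≤ w p) (r s : ι → ℂ) :
    ‖∑ p, r p * (w p : ℂ) - ∑ p, s p * (w p : ℂ)‖ ≤ (∑ p, w p) * dist r s := by
  rw [← Finset.sum_sub_distrib, Finset.sum_mul]
  refine (norm_sum_le _ _).trans (Finset.sum_le_sum fun p _ => ?_)
  rw [← sub_mul, norm_mul, Complex.norm_of_nonneg (hw p), mul_comm, ← dist_eq_norm]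
  exact mul_le_mul_of_nonneg_left (dist_le_pi_dist r s p) (hw p)

lemma dist_fixedPointMap_le (hu : ∀ i p, 0 ≤ u i p) (hrow : ∀ i, ∑ p, u i p ≤ κ) (ha : 0 ≤ a)
    (hκ : 0 ≤ κ) (hz : z.im ≠ 0) {r s : ι → ℂ} (hr : r ∈ sameHalfPlane z)
    (hs : s ∈ sameHalfPlane z) :
    dist (fixedPointMap u a z r) (fixedPointMap u a z s) ≤ a * κ / z.im ^ 2 * dist r s := by
  refine (dist_pi_le_iff (by positivity)).2 fun i => ?_
  have hwr := abs_im_le_norm_denom hu ha hr i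
  have hws := abs_im_le_norm_denom hu ha hs i
  have hz' : 0 < |z.im| := abs_pos.mpr hz
  have hr0 : denom u a z r i ≠ 0 := norm_pos_iff.mp (hz'.trans_le hwr)
  have hs0 : denom u a z s i ≠ 0 := norm_pos_iff.mp (hz'.trans_le hws)
  have hdiff : denom u a z r i - denom u a z s i
      = a * (∑ p, r p * (u i p : ℂ) - ∑ p, s p * (u i p : ℂ)) := by
    simp only [denom]; ring
  calc dist (fixedPointMap u a z r i) (fixedPointMap u a z s i)
      = ‖denom u a z r i - denom u a z s i‖ / (‖denom u a z r i‖ * ‖denom u a z s i‖) := by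
        rw [dist_eq_norm, fixedPointMap, fixedPointMap, ← norm_mul, ← norm_div]
        congr 1
        field_simp
        ring
    _ ≤ ‖denom u a z r i - denom u a z s i‖ / z.im ^ 2 := by
        gcongr
        rw [← sq_abs, sq]
        gcongr
    _ ≤ a * ((∑ p, u i p) * dist r s) / z.im ^ 2 := by
        rw [hdiff, norm_mul, Complex.norm_of_nonneg ha]
        gcongr
        exact norm_sum_mul_sub_sum_mul_le (hu i) r s
    _ ≤ a * κ / z.im ^ 2 * dist r s := by
        rw [mul_div_right_comm, mul_div_right_comm a, ← mul_assoc]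
        gcongr
        exact hrow i

lemma contractingWith_restrict (hu : ∀ i p, 0 ≤ u i p) (hrow : ∀ i, ∑ p, u i p ≤ κ)
    (ha : 0 ≤ a) (hκ : 0 ≤ κ) (hz : z.im ≠ 0) (hsmall : a * κ < z.im ^ 2) :
    ContractingWith (a * κ / z.im ^ 2).toNNReal
      ((mapsTo_sameHalfPlane (z := z) hu ha).restrict _ _ _) := by
  refine ⟨Real.toNNReal_lt_one.2 ((div_lt_one (by positivity)).2 hsmall),
    LipschitzWith.of_dist_le' fun r s => ?_⟩
  exact dist_fixedPointMap_le hu hrow ha hκ hz r.2 s.2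

lemma existsUnique_fixedPoint_mem_sameHalfPlane (hu : ∀ i p, 0 ≤ u i p)
    (hrow : ∀ i, ∑ p, u i p ≤ κ) (ha : 0 ≤ a) (hκ : 0 ≤ κ) (hz : z.im ≠ 0)
    (hsmall : a * κ < z.im ^ 2) :
    ∃! r, r ∈ sameHalfPlane z ∧ fixedPointMap u a z r = r := by
  have : CompleteSpace (sameHalfPlane (ι := ι) z) :=
    (isClosed_sameHalfPlane z).isComplete.completeSpace_coe
  have : Nonempty (sameHalfPlane (ι := ι) z) := ⟨⟨0, zero_mem_sameHalfPlane z⟩⟩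
  have hf := contractingWith_restrict hu hrow ha hκ hz hsmall
  refine ⟨(ContractingWith.fixedPoint _ hf).1,
    ⟨(ContractingWith.fixedPoint _ hf).2, congrArg Subtype.val hf.fixedPoint_isFixedPt⟩, ?_⟩
  rintro r ⟨hr, hfix⟩
  have h : Function.IsFixedPt ((mapsTo_sameHalfPlane (z := z) hu ha).restrict _ _ _) ⟨r, hr⟩ :=
    Subtype.ext hfix
  exact congrArg Subtype.val (hf.fixedPoint_unique h)

lemma mem_sameHalfPlane_of_fixedPointMap_eq (hu : ∀ i p, 0 ≤ u i p)
    (hrow : ∀ i, ∑ p, u i p ≤ κ) (ha : 0 ≤ a) (hsmall : 2 * (a * κ) < z.im ^ 2) {r : ι → ℂ}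
    (hball : ∀ i, ‖r i‖ ≤ 2 / |z.im|) (hfix : fixedPointMap u a z r = r) :
    r ∈ sameHalfPlane z := by
  by_contra hneg
  obtain ⟨i, hi⟩ : ∃ i, (r i).im * z.im < 0 := by simpa [sameHalfPlane] using hneg
  obtain ⟨j, -, hj⟩ :=
    Finset.univ.exists_min_image (fun p => (r p).im * z.im) ⟨i, Finset.mem_univ i⟩
  set t := (r j).im * z.im with ht_def
  have ht : t < 0 := (hj i (Finset.mem_univ _)).trans_lt hi
  have ht2 : -2 ≤ t := by
    have hz : 0 < |z.im| := abs_pos.mpr fun h => by simp [t, h] at ht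
    have : |t| ≤ 2 := calc
      |t| = |(r j).im| * |z.im| := abs_mul _ _
      _ ≤ 2 / |z.im| * |z.im| := by
          gcongr; exact (Complex.abs_im_le_norm _).trans (hball j)
      _ = 2 := div_mul_cancel₀ _ hz.ne'
    linarith [neg_abs_le t]
  have hκ : 0 ≤ κ := (Finset.sum_nonneg fun p _ => hu j p).trans (hrow j)
  have hw : (denom u a z r j).im * z.im < 0 := by
    rw [ht_def, ← congrFun hfix j, fixedPointMap, im_neg_one_div, div_mul_eq_mul_div] at ht
    exact lt_of_not_ge fun h => (div_nonneg h (Complex.normSq_nonneg _)).not_gt ht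
  have hsum : κ * t ≤ ∑ p, (r p).im * z.im * u j p := calc
    κ * t ≤ (∑ p, u j p) * t := mul_le_mul_of_nonpos_right (hrow j) ht.le
    _ = ∑ p, t * u j p := by rw [Finset.sum_mul]; simp only [mul_comm]
    _ ≤ _ := Finset.sum_le_sum fun p _ =>
      mul_le_mul_of_nonneg_right (hj p (Finset.mem_univ _)) (hu j p)
  rw [im_denom_mul_im] at hw
  nlinarith [mul_le_mul_of_nonneg_left hsum ha, mul_le_mul_of_nonneg_left ht2 (mul_nonneg ha hκ)]

lemma eq_neg_one_div_add_iff {x z a s : ℂ} (hz : z ≠ 0) :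
    x = -1 / z + -1 / z * a * x * s ↔ x * (z + a * s) = -1 := by
  constructor <;> intro h
  · field_simp at h
    linear_combination h
  · field_simp
    linear_combination h

lemma solution_iff_fixedPoint (hu : ∀ i p, 0 ≤ u i p) (hrow : ∀ i, ∑ p, u i p ≤ κ) (ha : 0 ≤ a)
    (hsmall : 2 * (a * κ) < z.im ^ 2) (hz : z.im ≠ 0) (r : ι → ℂ) :
    ((∀ i, ‖r i‖ ≤ 2 / |z.im|) ∧ ∀ i, r i = -1 / z + -1 / z * a * r i * ∑ p, r p * (u i p : ℂ)) ↔
      r ∈ sameHalfPlane z ∧ fixedPointMap u a z r = r := by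
  have hz0 : z ≠ 0 := fun h => hz (by simp [h])
  constructor
  · rintro ⟨hball, heq⟩
    have hprod i : r i * denom u a z r i = -1 := (eq_neg_one_div_add_iff hz0).1 (heq i)
    have hfix : fixedPointMap u a z r = r := funext fun i => by
      have hw : denom u a z r i ≠ 0 := right_ne_zero_of_mul (by rw [hprod i]; norm_num)
      exact ((eq_div_iff hw).2 (hprod i)).symm
    exact ⟨mem_sameHalfPlane_of_fixedPointMap_eq hu hrow ha hsmall hball hfix, hfix⟩
  · rintro ⟨hr, hfix⟩
    refine ⟨fun i => ?_, fun i => ?_⟩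
    · rw [← hfix]
      calc ‖fixedPointMap u a z r i‖ ≤ 1 / |z.im| := norm_fixedPointMap_le hu ha hz hr i
        _ ≤ 2 / |z.im| := by gcongr; norm_num
    · have hw : denom u a z r i ≠ 0 :=
        norm_pos_iff.mp ((abs_pos.mpr hz).trans_le (abs_im_le_norm_denom hu ha hr i))
      exact (eq_neg_one_div_add_iff hz0).2 ((eq_div_iff hw).1 (congrFun hfix i).symm)

theorem existsUnique_solution (hu : ∀ i p, 0 ≤ u i p) (hrow : ∀ i, ∑ p, u i p ≤ κ)
    (ha : 0 ≤ a) (hκ : 0 ≤ κ) (hsmall : 2 * (a * κ) < z.im ^ 2) :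
    ∃! r : ι → ℂ, (∀ i, ‖r i‖ ≤ 2 / |z.im|) ∧
      ∀ i, r i = -1 / z + -1 / z * a * r i * ∑ p, r p * (u i p : ℂ) := by
  have hz : z.im ≠ 0 := by
    rintro h
    rw [h, zero_pow two_ne_zero] at hsmall
    linarith [mul_nonneg ha hκ]
  rw [existsUnique_congr (solution_iff_fixedPoint hu hrow ha hsmall hz)]
  exact existsUnique_fixedPoint_mem_sameHalfPlane hu hrow ha hκ hz
    (by linarith [mul_nonneg ha hκ])

end SelfConsistent

theorem selfconsistent_unique_solution_general (v : ℝ) (hv : 0 < v) (z : ℂ)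
    (hz : 2 * v + 1 ≤ |z.im|) (N : ℕ) (u : Fin N → Fin N → ℝ)
    (hu : ∀ i p, 0 ≤ u i p) (c b : ℝ)
    (hrow : ∀ i, (∑ p, u i p) ≤ 1 + c / b)
    (hsmall : v ^ 2 * (1 + c / b) / (2 * v + 1) ^ 2 < 1 / 2) :
    ∃! r : Fin N → ℂ,
      (∀ i, ‖r i‖ ≤ 2 / |z.im|) ∧
      ∀ i, r i = -1 / z + (-1 / z) * (v : ℂ) ^ 2 * r i * ∑ p, r p * (u i p : ℂ) := by
  rcases isEmpty_or_nonempty (Fin N) with _ | ⟨⟨i⟩⟩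
  · exact ⟨isEmptyElim, ⟨isEmptyElim, isEmptyElim⟩, fun _ _ => funext isEmptyElim⟩
  have hκ : 0 ≤ 1 + c / b := (Finset.sum_nonneg fun p _ => hu i p).trans (hrow i)
  have hη : 0 < 2 * v + 1 := by linarith
  have hsq : (2 * v + 1) ^ 2 ≤ z.im ^ 2 := by
    rw [← sq_abs z.im]
    gcongr
  rw [div_lt_iff₀ (by positivity)] at hsmall
  simpa only [Complex.ofReal_pow] using
    SelfConsistent.existsUnique_solution hu hrow (sq_nonneg v) hκ (by linarith)

/-- unique solvability of the self-consistent system: for `|Im z| ≥ 2v+1`,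
`ξ = −1/z`, and nonnegative weights `u(i,p)` with row sums bounded by `1 + c/b` such that
`v²(1+c/b)/η² < 1/2`, the system `r(i) = ξ + ξ v² r(i) Σ_p r(p) u(i,p)` has a unique
solution with `sup_i |r(i)| ≤ 2/|Im z|`. -/
theorem selfconsistent_unique_solution (v : ℝ) (hv : 0 < v) (z : ℂ)
    (hz : 2 * v + 1 ≤ |z.im|) (N : ℕ) (u : Fin N → Fin N → ℝ)
    (hu : ∀ i p, 0 ≤ u i p) (c b : ℝ) (hb : 0 < b)
    (hrow : ∀ i, (∑ p, u i p) ≤ 1 + c / b)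
    (hsmall : v ^ 2 * (1 + c / b) / (2 * v + 1) ^ 2 < 1 / 2) :
    ∃! r : Fin N → ℂ,
      (∀ i, ‖r i‖ ≤ 2 / |z.im|) ∧
      ∀ i, r i = -1 / z + (-1 / z) * (v : ℂ) ^ 2 * r i * ∑ p, r p * (u i p : ℂ) :=
  selfconsistent_unique_solution_general v hv z hz N u hu c b hrow hsmall
end

section
/- Stability of the fixed-point equation: let z satisfy |Im z| ≥ η = 2v+1 and set τ = v²/η² < 1/4. If w solves w = ξ + ξv²w² (ξ = −1/z, w the Stieltjes transform of the semicircle law, |w| ≤ 1/|Im z|) and a complex number g satisfies |g| ≤ 1/|Im z| and g = ξ + ξv²g² + δ, then |g − w| ≤ |δ|/(1 − 2τ). -/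
/-!
Subtracting the two fixed-point equations gives `g - w = ξ v² (g + w) (g - w) + δ`. The a priori
bounds `|g|, |w|, |ξ| ≤ 1 / |Im z| ≤ 1 / η` make the factor `ξ v² (g + w)` a contraction of size at
most `2τ < 1`, hence `|g - w| ≤ 2τ |g - w| + |δ|`.
-/

lemma le_div_one_sub_of_le_mul_add {t q d : ℝ} (hq : q < 1) (h : t ≤ q * t + d) :
    t ≤ d / (1 - q) := by
  rw [le_div_iff₀ (sub_pos.mpr hq)]
  linear_combination h

theorem norm_sub_le_of_quadratic_fixed_point {𝕜 : Type*} [NormedField 𝕜] {a b x y δ : 𝕜}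
    {q : ℝ} (hx : x = a + b * x ^ 2) (hy : y = a + b * y ^ 2 + δ)
    (hb : ‖b‖ * (‖y‖ + ‖x‖) ≤ q) (hq : q < 1) : ‖y - x‖ ≤ ‖δ‖ / (1 - q) := by
  have hdiff : y - x = b * (y + x) * (y - x) + δ := by linear_combination hy - hx
  refine le_div_one_sub_of_le_mul_add hq ?_
  calc ‖y - x‖ = ‖b * (y + x) * (y - x) + δ‖ := congrArg norm hdiff
    _ ≤ ‖b‖ * (‖y‖ + ‖x‖) * ‖y - x‖ + ‖δ‖ := by
      grw [norm_add_le, norm_mul, norm_mul, norm_add_le]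
    _ ≤ q * ‖y - x‖ + ‖δ‖ := by gcongr

lemma Complex.norm_neg_one_div_le_one_div_abs_im {z : ℂ} (hz : 0 < |z.im|) :
    ‖-1 / z‖ ≤ 1 / |z.im| := by
  rw [norm_div, norm_neg, norm_one]
  exact one_div_le_one_div_of_le hz (Complex.abs_im_le_norm z)

lemma two_mul_sq_div_sq_two_mul_add_one_lt_one {v : ℝ} (hv : 0 ≤ v) :
    2 * (v ^ 2 / (2 * v + 1) ^ 2) < 1 := by
  rw [mul_div_assoc', div_lt_one (by positivity)]
  nlinarith

/-- stability of the fixed-point equation: let `|Im z| ≥ η = 2v+1`,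
`τ = v²/η²`, `ξ = −1/z`. If `w` solves `w = ξ + ξv²w²` with `|w| ≤ 1/|Im z|` and `g`
satisfies `|g| ≤ 1/|Im z|` and `g = ξ + ξv²g² + δ`, then `|g − w| ≤ |δ|/(1 − 2τ)`. -/
theorem fixed_point_stability (v : ℝ) (hv : 0 < v) (z : ℂ) (hz : 2 * v + 1 ≤ |z.im|)
    (w g δ : ℂ) (hw : w = -1 / z + (-1 / z) * (v : ℂ) ^ 2 * w ^ 2)
    (hwb : ‖w‖ ≤ 1 / |z.im|) (hgb : ‖g‖ ≤ 1 / |z.im|)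
    (hg : g = -1 / z + (-1 / z) * (v : ℂ) ^ 2 * g ^ 2 + δ) :
    ‖g - w‖ ≤ ‖δ‖ / (1 - 2 * (v ^ 2 / (2 * v + 1) ^ 2)) := by
  have hη : 0 < 2 * v + 1 := by linarith
  have him : 0 < |z.im| := hη.trans_le hz
  have hξ : ‖-1 / z * (v : ℂ) ^ 2‖ ≤ 1 / |z.im| * v ^ 2 := by
    rw [norm_mul, norm_pow, Complex.norm_real, Real.norm_eq_abs, sq_abs]
    gcongr
    exact Complex.norm_neg_one_div_le_one_div_abs_im him
  refine norm_sub_le_of_quadratic_fixed_point hw hg ?_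
    (two_mul_sq_div_sq_two_mul_add_one_lt_one hv.le)
  calc ‖-1 / z * (v : ℂ) ^ 2‖ * (‖g‖ + ‖w‖)
      ≤ 1 / |z.im| * v ^ 2 * (1 / |z.im| + 1 / |z.im|) := by gcongr
    _ = 2 * (v ^ 2 / |z.im| ^ 2) := by ring
    _ ≤ 2 * (v ^ 2 / (2 * v + 1) ^ 2) := by gcongr
end

section
/- Convergence of Stieltjes transforms on a set with an accumulation point extends: if (μ_n) is a sequence of probability measures on ℝ with Stieltjes transforms g_n(z) = ∫dμ_n/(λ−z), and g_n(z) → w(z) for every z in the region Λ_η = {z : |Im z| ≥ η} for some η > 0, where w is the Stieltjes transform of a probability measure μ, then g_n(z) → w(z) for every z ∈ ℂ \ ℝ, and μ_n converges weakly to μ. -/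
/-!
For `γ > 0`, `Im ∫ dν(l) / (l - (x + iγ)) = π ∫ cauchyPDF(l, γ, x) dν(l)`, which is `π` times the
density of `ν ∗ Cauchy(0, γ)` at `x`. Taking `γ = η`, the hypothesis says that these densities
converge pointwise. They are nonnegative with total mass one, so by Scheffé's lemma they converge
in `L¹`, and so do their Fourier transforms `e^{-η|t|} φ_{μ_n}(t)`. Hence the characteristic
functions converge, and Lévy's continuity theorem gives `μ_n → μ` weakly. Since `l ↦ 1 / (l - z)`
is bounded and continuous for every nonreal `z`, weak convergence in turn gives convergence of the
Stieltjes transforms everywhere off the real axis.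
-/

open MeasureTheory Filter Complex ProbabilityTheory Set
open scoped FourierTransform NNReal Topology BoundedContinuousFunction

/-- Scheffé's lemma: as `|a| = a + 2 max (-a) 0` and `∫ (F i - f) = 0`, it suffices that the
negative parts of `F i - f`, which are dominated by `|f|`, have vanishing integrals. -/
theorem tendsto_lintegral_enorm_sub_of_integral_eq {α ι : Type*} [MeasurableSpace α]
    {μ : Measure α} {l : Filter ι} [l.IsCountablyGenerated] {F : ι → α → ℝ} {f : α → ℝ}
    (hF : ∀ i, Integrable (F i) μ) (hf : Integrable f μ) (hF_nonneg : ∀ i, 0 ≤ᵐ[μ] F i)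
    (hF_lim : ∀ᵐ x ∂μ, Tendsto (fun i => F i x) l (𝓝 (f x)))
    (h_int : ∀ i, ∫ x, F i x ∂μ = ∫ x, f x ∂μ) :
    Tendsto (fun i => ∫⁻ x, ‖F i x - f x‖ₑ ∂μ) l (𝓝 0) := by
  have hsub : ∀ i, Integrable (fun x => F i x - f x) μ := fun i => (hF i).sub hf
  have hneg : ∀ i, Integrable (fun x => max (f x - F i x) 0) μ :=
    fun i => (hf.sub (hF i)).pos_part
  have hneg_lim : Tendsto (fun i => ∫ x, max (f x - F i x) 0 ∂μ) l (𝓝 0) := by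
    have := tendsto_integral_filter_of_dominated_convergence (l := l)
      (F := fun i x => max (f x - F i x) 0) (f := fun _ => 0) (fun x => |f x|)
      (Eventually.of_forall fun i => (hneg i).aestronglyMeasurable)
      (Eventually.of_forall fun i => ?_) hf.abs ?_
    · simpa using this
    · filter_upwards [hF_nonneg i] with x hx
      rw [Real.norm_eq_abs, abs_of_nonneg (le_max_right _ _)]
      exact max_le (by linarith [le_abs_self (f x), show 0 ≤ F i x from hx]) (abs_nonneg _)
    · filter_upwards [hF_lim] with x hx
      simpa using ((tendsto_const_nhds (x := f x)).sub hx).max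
        (tendsto_const_nhds (x := (0 : ℝ)))
  have habs : ∀ i, ∫ x, ‖F i x - f x‖ ∂μ = 2 * ∫ x, max (f x - F i x) 0 ∂μ := fun i => by
    have hsplit : ∀ x, ‖F i x - f x‖ = (F i x - f x) + 2 * max (f x - F i x) 0 := fun x => by
      rw [Real.norm_eq_abs]
      rcases le_total (F i x) (f x) with h | h
      · rw [abs_of_nonpos (by linarith), max_eq_left (by linarith)]; ring
      · rw [abs_of_nonneg (by linarith), max_eq_right (by linarith)]; ring
    simp_rw [hsplit]
    rw [integral_add (hsub i) ((hneg i).const_mul 2), integral_sub (hF i) hf, h_int i, sub_self,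
      zero_add, integral_const_mul]
  have hreal : Tendsto (fun i => ∫ x, ‖F i x - f x‖ ∂μ) l (𝓝 0) := by
    simpa only [habs, mul_zero] using hneg_lim.const_mul 2
  have hofReal := (ENNReal.continuous_ofReal.tendsto 0).comp hreal
  rw [ENNReal.ofReal_zero] at hofReal
  exact hofReal.congr fun i => ofReal_integral_norm_eq_lintegral_enorm (hsub i)

section FourierExpNegAbs

variable {a : ℂ}

lemma eqOn_Iic_cexp_mul_exp_neg_abs :
    EqOn (fun v : ℝ => cexp (a * v) * Real.exp (-|v|)) (fun v : ℝ => cexp ((a + 1) * v))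
      (Iic 0) := by
  intro v hv
  simp only [abs_of_nonpos (mem_Iic.mp hv), neg_neg, ofReal_exp, ← Complex.exp_add]
  ring_nf

lemma eqOn_Ioi_cexp_mul_exp_neg_abs :
    EqOn (fun v : ℝ => cexp (a * v) * Real.exp (-|v|)) (fun v : ℝ => cexp ((a - 1) * v))
      (Ioi 0) := by
  intro v hv
  simp only [abs_of_pos (mem_Ioi.mp hv), ofReal_exp, ofReal_neg, ← Complex.exp_add]
  ring_nf

lemma integrable_cexp_mul_exp_neg_abs (ha : |a.re| < 1) :
    Integrable fun v : ℝ => cexp (a * v) * Real.exp (-|v|) := by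
  rw [abs_lt] at ha
  have hIic := (integrableOn_exp_mul_complex_Iic (a := a + 1) (by simp; linarith) 0).congr_fun
    eqOn_Iic_cexp_mul_exp_neg_abs.symm measurableSet_Iic
  have hIoi := (integrableOn_exp_mul_complex_Ioi (a := a - 1) (by simp; linarith) 0).congr_fun
    eqOn_Ioi_cexp_mul_exp_neg_abs.symm measurableSet_Ioi
  simpa [← integrableOn_univ, Iic_union_Ioi] using hIic.union hIoi

lemma integral_cexp_mul_exp_neg_abs (ha : |a.re| < 1) :
    ∫ v : ℝ, cexp (a * v) * Real.exp (-|v|) = 2 / (1 - a ^ 2) := by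
  have hint := integrable_cexp_mul_exp_neg_abs ha
  rw [abs_lt] at ha
  have hp : 0 < (a + 1).re := by simp; linarith
  have hm : (a - 1).re < 0 := by simp; linarith
  have hp0 : a + 1 ≠ 0 := fun h => by simp [h] at hp
  have hm0 : a - 1 ≠ 0 := fun h => by simp [h] at hm
  rw [← intervalIntegral.integral_Iic_add_Ioi (b := 0) hint.integrableOn hint.integrableOn,
    setIntegral_congr_fun measurableSet_Iic eqOn_Iic_cexp_mul_exp_neg_abs,
    setIntegral_congr_fun measurableSet_Ioi eqOn_Ioi_cexp_mul_exp_neg_abs,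
    integral_exp_mul_complex_Iic hp, integral_exp_mul_complex_Ioi hm]
  simp only [ofReal_zero, mul_zero, Complex.exp_zero]
  have : 1 - a ^ 2 = -((a + 1) * (a - 1)) := by ring
  rw [this]
  field_simp
  ring

lemma fourier_exp_neg_abs (w : ℝ) :
    𝓕 (fun v : ℝ => (Real.exp (-|v|) : ℂ)) w = 2 / (1 + (2 * Real.pi * w) ^ 2) := by
  have hexp : ∀ v : ℝ, cexp (↑(-2 * Real.pi * v * w) * I) • (Real.exp (-|v|) : ℂ)
      = cexp ((-2 * Real.pi * w * I) * v) * Real.exp (-|v|) := fun v => by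
    rw [smul_eq_mul]; push_cast; ring_nf
  rw [Real.fourier_real_eq_integral_exp_smul, integral_congr_ae (ae_of_all _ hexp),
    integral_cexp_mul_exp_neg_abs (by simp)]
  ring_nf
  rw [I_sq]
  ring

end FourierExpNegAbs

lemma integral_cexp_mul_inv_one_add_sq (t : ℝ) :
    ∫ s : ℝ, cexp (t * s * I) * ((1 + s ^ 2)⁻¹ : ℝ) = Real.pi * Real.exp (-|t|) := by
  set f : ℝ → ℂ := fun v => Real.exp (-|v|)
  have hf : Integrable f := by
    simpa [f] using integrable_cexp_mul_exp_neg_abs (a := 0) (by simp)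
  have hFf : Integrable (𝓕 f) := by
    have h := ((integrable_inv_one_add_sq.comp_mul_left' (R := 2 * Real.pi)
      (by positivity)).const_mul 2).ofReal (𝕜 := ℂ)
    convert h using 2 with w
    rw [fourier_exp_neg_abs, div_eq_mul_inv]
    norm_cast
  -- Fourier inversion for `e^{-|v|}`, followed by the substitution `s = 2πw`
  have hinv := hf.fourierInv_fourier_eq hFf (v := t) (by fun_prop)
  rw [Real.fourierInv_eq'] at hinv
  set g : ℝ → ℂ := fun w =>
    cexp (↑(2 * Real.pi * w * t) * I) * ((2 / (1 + (2 * Real.pi * w) ^ 2) : ℝ) : ℂ)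
  have hg_int : ∫ w, g w = Real.exp (-|t|) := by
    rw [show ((Real.exp (-|t|) : ℝ) : ℂ) = f t from rfl, ← hinv]
    refine integral_congr_ae (ae_of_all _ fun w => ?_)
    simp only [g, f, fourier_exp_neg_abs, Real.inner_apply, smul_eq_mul]
    push_cast
    ring_nf
  have hsub := Measure.integral_comp_div g (2 * Real.pi)
  rw [hg_int, abs_of_pos Real.two_pi_pos] at hsub
  have hg : ∀ s : ℝ, cexp (t * s * I) * ((1 + s ^ 2)⁻¹ : ℝ) = 2⁻¹ * g (s / (2 * Real.pi)) :=
    fun s => by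
      have : 2 * Real.pi * (s / (2 * Real.pi)) = s := by field_simp
      simp only [g, this, mul_right_comm _ _ t]
      push_cast
      field_simp
  rw [integral_congr_ae (ae_of_all _ hg), integral_const_mul, hsub, real_smul]
  push_cast
  ring

lemma integral_cexp_mul_cauchyPDFReal (x₀ : ℝ) {γ : ℝ≥0} (hγ : γ ≠ 0) (t : ℝ) :
    ∫ x : ℝ, cexp (t * x * I) * cauchyPDFReal x₀ γ x
      = cexp (t * x₀ * I) * Real.exp (-(γ * |t|)) := by
  have hγ' : (0 : ℝ) < γ := NNReal.coe_pos.mpr (pos_iff_ne_zero.mpr hγ)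
  set G : ℝ → ℂ := fun s => cexp ((t * γ : ℝ) * s * I) * ((1 + s ^ 2)⁻¹ : ℝ)
  have hG : ∀ x : ℝ, cexp (t * x * I) * cauchyPDFReal x₀ γ x
      = (cexp (t * x₀ * I) * (Real.pi⁻¹ * γ⁻¹ : ℝ)) * G ((x - x₀) / γ) := fun x => by
    simp only [G, cauchyPDFReal_def']
    have : (t * γ : ℝ) * ((x - x₀) / γ : ℝ) = t * x - t * x₀ := by field_simp
    rw [← ofReal_mul (t * γ), this, ofReal_sub, sub_mul, Complex.exp_sub]
    push_cast
    field_simp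
  rw [integral_congr_ae (ae_of_all _ hG), integral_const_mul,
    integral_sub_right_eq_self (fun u => G (u / γ)), Measure.integral_comp_div,
    integral_cexp_mul_inv_one_add_sq, abs_of_pos hγ', abs_mul, NNReal.abs_eq, real_smul]
  have : ((γ : ℝ) : ℂ) ≠ 0 := by exact_mod_cast hγ'.ne'
  push_cast
  field_simp

lemma MeasureTheory.Integrable.cexp_mul_I_mul {α : Type*} [MeasurableSpace α] {μ : Measure α}
    {f g : α → ℝ} (hf : Integrable f μ) (hg : Measurable g) (t : ℝ) :
    Integrable (fun x => cexp (t * g x * I) * f x) μ :=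
  hf.ofReal.bdd_mul (c := 1)
    (by fun_prop : Measurable fun x => cexp (t * g x * I)).aestronglyMeasurable
    (ae_of_all _ fun x => by rw [← ofReal_mul, norm_exp_ofReal_mul_I])

/-- The density of `ν ∗ cauchyMeasure 0 γ`. -/
noncomputable def convCauchyPDF (ν : Measure ℝ) (γ : ℝ≥0) (x : ℝ) : ℝ :=
  ∫ l, cauchyPDFReal l γ x ∂ν

lemma convCauchyPDF_nonneg (ν : Measure ℝ) (γ : ℝ≥0) (x : ℝ) : 0 ≤ convCauchyPDF ν γ x :=
  integral_nonneg fun l => by rw [cauchyPDFReal_def]; positivity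

section convCauchyPDF

variable (ν : Measure ℝ) {γ : ℝ≥0}

lemma integrable_cauchyPDFReal_prod [IsFiniteMeasure ν] (hγ : γ ≠ 0) :
    Integrable (fun p : ℝ × ℝ => cauchyPDFReal p.1 γ p.2) (ν.prod volume) := by
  have hmeas : Measurable fun p : ℝ × ℝ => cauchyPDFReal p.1 γ p.2 := by
    simp only [cauchyPDFReal_def]; fun_prop
  refine (integrable_prod_iff hmeas.aestronglyMeasurable).2 ⟨ae_of_all _ fun l =>
    integrable_cauchyPDFReal l, ?_⟩
  refine (integrable_const (1 : ℝ)).congr (ae_of_all _ fun l => ?_)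
  dsimp only
  rw [← integral_cauchyPDFReal_eq_one l hγ]
  refine integral_congr_ae (ae_of_all _ fun x => ?_)
  simp [abs_of_pos (cauchyPDF_pos l hγ x)]

lemma integrable_convCauchyPDF [IsFiniteMeasure ν] (hγ : γ ≠ 0) :
    Integrable (convCauchyPDF ν γ) :=
  (integrable_cauchyPDFReal_prod ν hγ).integral_prod_right

lemma integral_cexp_mul_convCauchyPDF [IsFiniteMeasure ν] (hγ : γ ≠ 0) (t : ℝ) :
    ∫ x : ℝ, cexp (t * x * I) * convCauchyPDF ν γ x
      = Real.exp (-(γ * |t|)) * charFun ν t := by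
  have hint : Integrable (Function.uncurry fun l x : ℝ => cexp (t * x * I) * cauchyPDFReal l γ x)
      (ν.prod volume) :=
    (integrable_cauchyPDFReal_prod ν hγ).cexp_mul_I_mul measurable_snd t
  calc ∫ x : ℝ, cexp (t * x * I) * convCauchyPDF ν γ x
      = ∫ x : ℝ, ∫ l, cexp (t * x * I) * cauchyPDFReal l γ x ∂ν := by
        refine integral_congr_ae (ae_of_all _ fun x => ?_)
        simp only [convCauchyPDF]
        rw [integral_const_mul, ← integral_complex_ofReal]
    _ = ∫ l, cexp (t * l * I) * Real.exp (-(γ * |t|)) ∂ν := by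
        rw [← integral_integral_swap hint]
        exact integral_congr_ae (ae_of_all _ fun l => integral_cexp_mul_cauchyPDFReal l hγ t)
    _ = Real.exp (-(γ * |t|)) * charFun ν t := by
        rw [integral_mul_const, charFun_apply_real, mul_comm]

lemma integral_convCauchyPDF [IsFiniteMeasure ν] (hγ : γ ≠ 0) :
    ∫ x, convCauchyPDF ν γ x = ν.real Set.univ := by
  have h := integral_cexp_mul_convCauchyPDF ν hγ 0
  simp only [ofReal_zero, zero_mul, Complex.exp_zero, one_mul, abs_zero, mul_zero, neg_zero,
    Real.exp_zero, charFun_zero] at h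
  rw [integral_complex_ofReal, ofReal_one, one_mul] at h
  exact_mod_cast h

end convCauchyPDF

section

variable {ι : Type*} {l : Filter ι} [l.IsCountablyGenerated] {γ : ℝ≥0}

lemma tendsto_charFun_of_tendsto_convCauchyPDF {ν : ι → Measure ℝ}
    [∀ i, IsProbabilityMeasure (ν i)] {ν₀ : Measure ℝ} [IsProbabilityMeasure ν₀] (hγ : γ ≠ 0)
    (h : ∀ x, Tendsto (fun i => convCauchyPDF (ν i) γ x) l (𝓝 (convCauchyPDF ν₀ γ x))) (t : ℝ) :
    Tendsto (fun i => charFun (ν i) t) l (𝓝 (charFun ν₀ t)) := by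
  have hL1 := tendsto_lintegral_enorm_sub_of_integral_eq
    (fun i => integrable_convCauchyPDF (ν i) hγ) (integrable_convCauchyPDF ν₀ hγ)
    (fun i => ae_of_all _ (convCauchyPDF_nonneg (ν i) γ)) (ae_of_all _ h)
    (fun i => by simp only [integral_convCauchyPDF _ hγ, probReal_univ])
  have hfourier : Tendsto (fun i => ∫ x : ℝ, cexp (t * x * I) * convCauchyPDF (ν i) γ x) l
      (𝓝 (∫ x : ℝ, cexp (t * x * I) * convCauchyPDF ν₀ γ x)) := by
    refine tendsto_integral_of_L1 _ ?_ ?_ (hL1.congr fun i => ?_)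
    · exact ((integrable_convCauchyPDF ν₀ hγ).cexp_mul_I_mul measurable_id
        t).aestronglyMeasurable
    · exact Eventually.of_forall fun i =>
        (integrable_convCauchyPDF (ν i) hγ).cexp_mul_I_mul measurable_id t
    · refine lintegral_congr fun x => ?_
      rw [← mul_sub, enorm_mul, ← ofReal_mul, enorm_exp_ofReal_mul_I, one_mul, ← ofReal_sub,
        enorm_eq_nnnorm, enorm_eq_nnnorm, nnnorm_real]
  simp_rw [integral_cexp_mul_convCauchyPDF _ hγ] at hfourier
  have := hfourier.const_mul (Real.exp (γ * |t|) : ℂ)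
  simpa [← mul_assoc, ← Complex.exp_add] using this

lemma MeasureTheory.ProbabilityMeasure.tendsto_of_tendsto_convCauchyPDF
    {μ : ℕ → ProbabilityMeasure ℝ} {μ₀ : ProbabilityMeasure ℝ} (hγ : γ ≠ 0)
    (h : ∀ x, Tendsto (fun n => convCauchyPDF (μ n) γ x) atTop (𝓝 (convCauchyPDF μ₀ γ x))) :
    Tendsto μ atTop (𝓝 μ₀) :=
  ProbabilityMeasure.tendsto_of_tendsto_charFun (tendsto_charFun_of_tendsto_convCauchyPDF hγ h)

end

section Stieltjes

variable {z : ℂ}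

lemma ofReal_sub_ne_zero_of_im_ne_zero (hz : z.im ≠ 0) (l : ℝ) : (l : ℂ) - z ≠ 0 :=
  fun h => hz (by simpa using congrArg im h)

lemma norm_one_div_ofReal_sub_le (hz : z.im ≠ 0) (l : ℝ) : ‖1 / ((l : ℂ) - z)‖ ≤ |z.im|⁻¹ := by
  rw [norm_div, norm_one, ← one_div]
  refine one_div_le_one_div_of_le (abs_pos.2 hz) ?_
  simpa using abs_im_le_norm ((l : ℂ) - z)

noncomputable def stieltjesKernel (z : ℂ) (hz : z.im ≠ 0) : ℝ →ᵇ ℂ :=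
  .ofNormedAddCommGroup (fun l : ℝ => 1 / ((l : ℂ) - z))
    (continuous_const.div (by fun_prop) (ofReal_sub_ne_zero_of_im_ne_zero hz)) |z.im|⁻¹
    (norm_one_div_ofReal_sub_le hz)

lemma im_one_div_ofReal_sub (l x : ℝ) {γ : ℝ≥0} :
    (1 / ((l : ℂ) - (x + γ * I))).im = Real.pi * cauchyPDFReal l γ x := by
  rw [cauchyPDFReal_def, one_div, inv_im, normSq_apply]
  simp only [sub_re, ofReal_re, add_re, mul_re, I_re, I_im, mul_zero, sub_im, ofReal_im, add_im,
    mul_im, mul_one, sub_zero, zero_add, zero_sub, neg_neg, add_zero]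
  field_simp
  ring

lemma im_integral_one_div_ofReal_sub (ν : Measure ℝ) [IsFiniteMeasure ν] {γ : ℝ≥0} (hγ : γ ≠ 0)
    (x : ℝ) :
    (∫ l : ℝ, 1 / ((l : ℂ) - (x + γ * I)) ∂ν).im = Real.pi * convCauchyPDF ν γ x := by
  have hz : (x + γ * I : ℂ).im ≠ 0 := by simpa using hγ
  have hint : Integrable (fun l : ℝ => 1 / ((l : ℂ) - (x + γ * I))) ν :=
    (stieltjesKernel _ hz).integrable ν
  rw [← RCLike.im_to_complex, ← integral_im hint, convCauchyPDF, ← integral_const_mul]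
  exact integral_congr_ae (ae_of_all _ fun l => im_one_div_ofReal_sub l x)

end Stieltjes

/-- if the Stieltjes transforms `g_n` of probability measures `μ_n` converge
to the Stieltjes transform `w` of a probability measure `μ` for every `z` with
`|Im z| ≥ η`, then they converge for every nonreal `z`, and `μ_n` converges weakly
to `μ`. -/
theorem stieltjes_convergence_extends (μn : ℕ → Measure ℝ)
    [∀ n, IsProbabilityMeasure (μn n)] (μ : Measure ℝ) [IsProbabilityMeasure μ]
    (η : ℝ) (hη : 0 < η)
    (hconv : ∀ z : ℂ, η ≤ |z.im| →
      Tendsto (fun n => ∫ l : ℝ, 1 / ((l : ℂ) - z) ∂(μn n)) atTop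
        (nhds (∫ l : ℝ, 1 / ((l : ℂ) - z) ∂μ))) :
    (∀ z : ℂ, z.im ≠ 0 →
      Tendsto (fun n => ∫ l : ℝ, 1 / ((l : ℂ) - z) ∂(μn n)) atTop
        (nhds (∫ l : ℝ, 1 / ((l : ℂ) - z) ∂μ))) ∧
    ∀ f : BoundedContinuousFunction ℝ ℝ,
      Tendsto (fun n => ∫ x, f x ∂(μn n)) atTop (nhds (∫ x, f x ∂μ)) := by
  set γ : ℝ≥0 := ⟨η, hη.le⟩
  have hγ : γ ≠ 0 := ne_of_gt hη
  have hγη : (γ : ℝ) = η := rfl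
  have hpdf : ∀ x : ℝ, Tendsto (fun n => convCauchyPDF (μn n) γ x) atTop
      (𝓝 (convCauchyPDF μ γ x)) := fun x => by
    have him := ((continuous_im.tendsto _).comp
      (hconv (x + γ * I) (by simp [hγη, le_abs_self]))).const_mul Real.pi⁻¹
    simpa only [Function.comp_def, im_integral_one_div_ofReal_sub _ hγ,
      inv_mul_cancel_left₀ Real.pi_ne_zero] using him
  have hweak := ProbabilityMeasure.tendsto_of_tendsto_convCauchyPDF
    (μ := fun n => ⟨μn n, inferInstance⟩) (μ₀ := ⟨μ, inferInstance⟩) hγ hpdf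
  exact ⟨fun z hz => (ProbabilityMeasure.tendsto_iff_forall_integral_rclike_tendsto ℂ).1 hweak
      (stieltjesKernel z hz),
    ProbabilityMeasure.tendsto_iff_forall_integral_tendsto.1 hweak⟩
end
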